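/- Let X be a closed orientable topological manifold of dimension n, E and F real vector bundles of the same fibre dimension over X, and L : E → F a bundle morphism. If the first Pontryagin classes satisfy p₁(E) − p₁(F) ∉ im β⁴ ⊂ H⁴(X;ℤ), where β⁴ : Ext¹_ℤ(H₃(X;ℤ),ℤ) → H⁴(X;ℤ) is the map from the universal coefficient theorem, then the covering dimension of Σ(L) is at least n − 4. -/

import Mathlib

/-!
Over the complement of `Σ(L)` the morphism `L` is a fibrewise isomorphism, so by naturality
`c = p(E) - p(F)` restricts to zero on `X ∖ Σ(L)`. As `c ∉ im β`, its Kronecker pairing with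
some `ξ ∈ H₄(X)` is nonzero, and then the exact sequence of the pair `(X, X ∖ Σ(L))` shows that
`ξ` survives in `H₄(X, X ∖ Σ(L))`. Poincaré–Lefschetz duality identifies that group with
`Ȟ^{n-4}(Σ(L))`, which is therefore nonzero; nonvanishing Čech cohomology of the compact space
`Σ(L)` bounds its covering dimension from below.
-/


set_option autoImplicit false

noncomputable section

open Bundle Set Module

/-- `HasCovDimLE Y m` : every finite open cover of `Y` has a finite open refinement in which
no point is included in more than `m + 1` elements. -/
def HasCovDimLE (Y : Type) [TopologicalSpace Y] (m : ℕ) : Prop :=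
  ∀ U : Finset (Set Y), (∀ u ∈ U, IsOpen u) → ⋃₀ (U : Set (Set Y)) = Set.univ →
    ∃ V : Finset (Set Y), (∀ v ∈ V, IsOpen v) ∧ ⋃₀ (V : Set (Set Y)) = Set.univ ∧
      (∀ v ∈ V, ∃ u ∈ U, v ⊆ u) ∧
      ∀ y : Y, {v ∈ (V : Set (Set Y)) | y ∈ v}.ncard ≤ m + 1

/-- The covering dimension of a topological space, as an element of `ℕ∞` (`⊤` if no finite
`m` works). -/
def covDim (Y : Type) [TopologicalSpace Y] : ℕ∞ :=
  sInf {d : ℕ∞ | ∃ m : ℕ, d = (m : ℕ∞) ∧ HasCovDimLE Y m}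

/-- The underlying graded groups of: relative singular homology `H_k(Y, A; R)` (with
`H_k(Y; R) = H_k(Y, ∅; R)`), singular cohomology `H^k(Y; G)`, Čech cohomology `Ȟ^k(Y; R)`
and the `Ext`-term `Ext¹_R(H_{k-1}(Y; R), G)` of the universal coefficient theorem. -/
structure CohomologyData (R : Type) [CommRing R] (G : Type) [AddCommGroup G] [Module R G] where
  /-- relative singular homology `H_k(Y, A; R)` -/
  Hrel : ∀ (Y : Type) [TopologicalSpace Y], Set Y → ℤ → Type
  instHrelAdd : ∀ (Y : Type) [TopologicalSpace Y] (A : Set Y) (k : ℤ), AddCommGroup (Hrel Y A k)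
  instHrelMod : ∀ (Y : Type) [TopologicalSpace Y] (A : Set Y) (k : ℤ), Module R (Hrel Y A k)
  /-- singular cohomology `H^k(Y; G)` -/
  Hco : ∀ (Y : Type) [TopologicalSpace Y], ℤ → Type
  instHcoAdd : ∀ (Y : Type) [TopologicalSpace Y] (k : ℤ), AddCommGroup (Hco Y k)
  /-- Čech cohomology `Ȟ^k(Y; R)` -/
  Hcech : ∀ (Y : Type) [TopologicalSpace Y], ℤ → Type
  instHcechAdd : ∀ (Y : Type) [TopologicalSpace Y] (k : ℤ), AddCommGroup (Hcech Y k)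
  /-- the group `Ext¹_R(H_{k-1}(Y; R), G)` appearing in the universal coefficient theorem -/
  ExtUCT : ∀ (Y : Type) [TopologicalSpace Y], ℤ → Type
  instExtAdd : ∀ (Y : Type) [TopologicalSpace Y] (k : ℤ), AddCommGroup (ExtUCT Y k)

attribute [instance] CohomologyData.instHrelAdd CohomologyData.instHrelMod
  CohomologyData.instHcoAdd CohomologyData.instHcechAdd CohomologyData.instExtAdd

/-- An axiomatization of the package consisting of singular homology of pairs (with
coefficients in a PID `R`), singular cohomology (with coefficients in an `R`-module `G`) and
Čech cohomology (with coefficients in `R`), together with: functoriality, the Kronecker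
pairing `α` (written `pair`, `α^k(η)(ξ) = ⟨η, ξ⟩`) and its naturality, the universal
coefficient exact sequence
`0 → Ext¹_R(H_{k-1}(Y;R), G) →^{β^k} H^k(Y;G) →^{α^k} Hom_R(H_k(Y;R), G) → 0`
(exactness at `H^k` and vanishing of the `Ext`-term on free homology), the homology long
exact sequence of a pair (the part `im j_* = ker π_*`), and the fact that non-vanishing of
`Ȟ^m` of a compact Hausdorff space forces its covering dimension to be at least `m`.
All of these are classical facts about the (co)homology of topological spaces; they are the
only properties used in the paper. -/
structure Theory (R : Type) [CommRing R] [IsDomain R] [IsPrincipalIdealRing R]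
    (G : Type) [AddCommGroup G] [Module R G] extends CohomologyData R G where
  /-- functoriality of relative homology for maps of pairs -/
  hmap : ∀ {Y Z : Type} [TopologicalSpace Y] [TopologicalSpace Z]
    (f : C(Y, Z)) {A : Set Y} {B : Set Z}, Set.MapsTo f A B →
    ∀ k : ℤ, Hrel Y A k →ₗ[R] Hrel Z B k
  /-- contravariant functoriality of singular cohomology -/
  cmap : ∀ {Y Z : Type} [TopologicalSpace Y] [TopologicalSpace Z]
    (f : C(Y, Z)) (k : ℤ), Hco Z k →+ Hco Y k
  cmap_id : ∀ (Y : Type) [TopologicalSpace Y] (k : ℤ) (x : Hco Y k),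
    cmap (ContinuousMap.id Y) k x = x
  /-- contravariant functoriality of Čech cohomology -/
  ccmap : ∀ {Y Z : Type} [TopologicalSpace Y] [TopologicalSpace Z]
    (f : C(Y, Z)) (k : ℤ), Hcech Z k →+ Hcech Y k
  /-- the Kronecker pairing `α^k : H^k(Y;G) → Hom_R(H_k(Y;R), G)`, `α^k(η)(ξ) = ⟨η, ξ⟩` -/
  pair : ∀ (Y : Type) [TopologicalSpace Y] (k : ℤ),
    Hco Y k →+ (Hrel Y (∅ : Set Y) k →ₗ[R] G)
  /-- naturality of the Kronecker pairing: `⟨f^*η, ξ⟩ = ⟨η, f_*ξ⟩` -/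
  pair_natural : ∀ {Y Z : Type} [TopologicalSpace Y] [TopologicalSpace Z] (f : C(Y, Z)) (k : ℤ)
    (η : Hco Z k) (ξ : Hrel Y (∅ : Set Y) k),
    pair Y k (cmap f k η) ξ = pair Z k η (hmap f (Set.mapsTo_empty _ _) k ξ)
  /-- the map `β^k : Ext¹_R(H_{k-1}(Y;R), G) → H^k(Y;G)` of the universal coefficient
  theorem -/
  betaMap : ∀ (Y : Type) [TopologicalSpace Y] (k : ℤ), ExtUCT Y k →+ Hco Y k
  /-- exactness of the universal coefficient sequence at `H^k(Y;G)`: `ker α^k = im β^k` -/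
  uct_exact : ∀ (Y : Type) [TopologicalSpace Y] (k : ℤ) (x : Hco Y k),
    pair Y k x = 0 ↔ x ∈ Set.range (betaMap Y k)
  /-- `Ext¹_R(H_{k-1}(Y;R), G)` vanishes if `H_{k-1}(Y;R)` is a free `R`-module -/
  uct_free : ∀ (Y : Type) [TopologicalSpace Y] (k : ℤ),
    Module.Free R (Hrel Y (∅ : Set Y) (k - 1)) → ∀ z : ExtUCT Y k, betaMap Y k z = 0
  /-- exactness of the long exact homology sequence of the pair `(X, X ∖ A)` at `H_k(X)`:
  `π_* ξ = 0` iff `ξ` comes from `H_k(X ∖ A)` -/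
  les_exact : ∀ (X : Type) [TopologicalSpace X] (A : Set X) (k : ℤ)
    (ξ : Hrel X (∅ : Set X) k),
    hmap (ContinuousMap.id X) (Set.mapsTo_empty _ _) k ξ = (0 : Hrel X Aᶜ k) ↔
      ∃ ζ : Hrel (↥(Aᶜ)) (∅ : Set ↥(Aᶜ)) k,
        hmap (⟨Subtype.val, continuous_subtype_val⟩ : C(↥(Aᶜ), X))
          (Set.mapsTo_empty _ _) k ζ = ξ
  /-- if the Čech cohomology `Ȟ^m(Y;R)` of a compact Hausdorff space is non-trivial
  then its covering dimension is at least `m` -/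
  dim_cech : ∀ (Y : Type) [TopologicalSpace Y] [CompactSpace Y] [T2Space Y] (m : ℕ),
    (∃ x : Hcech Y (m : ℤ), x ≠ 0) → (m : ℕ∞) ≤ covDim Y

/-- `X` is `R`-orientable (with respect to the homology theory `T`) if there is a compatible
continuous choice `o(λ)` of generators of the local homology modules
`H_n(X, X ∖ {λ}; R) ≅ R`: i.e. an open cover `{U_i}` of `X` and classes
`μ_i ∈ H_n(X, X ∖ U_i; R)` restricting to `o(λ)` for every `λ ∈ U_i`. -/
def ROrientable {R : Type} [CommRing R] [IsDomain R] [IsPrincipalIdealRing R]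
    {G : Type} [AddCommGroup G] [Module R G] (T : Theory R G)
    (n : ℕ) (X : Type) [TopologicalSpace X] : Prop :=
  ∃ o : ∀ x : X, T.Hrel X ({x}ᶜ) (n : ℤ),
    (∀ x, Submodule.span R {o x} = ⊤) ∧
    ∃ (ι : Type) (U : ι → Set X), (∀ i, IsOpen (U i)) ∧ (∀ x, ∃ i, x ∈ U i) ∧
      ∃ μ : ∀ i, T.Hrel X ((U i)ᶜ) (n : ℤ),
        ∀ (i) (x) (hx : x ∈ U i),
          T.hmap (ContinuousMap.id X)
            ((Set.mapsTo_id _).mono_right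
              (Set.compl_subset_compl.mpr (Set.singleton_subset_iff.mpr hx)))
            (n : ℤ) (μ i) = o x

/-- The full package: the (co)homology theories together with Poincaré–Lefschetz duality for
closed `R`-orientable topological `n`-manifolds (in the form of [Bredon, Cor. VI.8.4]: for a
closed subset `A ⊆ X` there is a commutative square consisting of the duality isomorphisms
`Ȟ^{n-k}(X;R) ≅ H_k(X;R)` and `Ȟ^{n-k}(A;R) ≅ H_k(X, X∖A;R)`, the restriction
`i^* : Ȟ^{n-k}(X;R) → Ȟ^{n-k}(A;R)` and `π_* : H_k(X;R) → H_k(X, X∖A;R)`), and the fact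
that every closed topological manifold is `R`-orientable when `2 = 0` in `R`. -/
structure GoodTheory (R : Type) [CommRing R] [IsDomain R] [IsPrincipalIdealRing R]
    (G : Type) [AddCommGroup G] [Module R G] extends Theory R G where
  /-- Poincaré–Lefschetz duality -/
  pd : ∀ (n : ℕ) (X : Type) [TopologicalSpace X] [T2Space X]
    [ChartedSpace (EuclideanSpace ℝ (Fin n)) X] [CompactSpace X],
    ROrientable toTheory n X →
    ∀ (k : ℤ) (A : Set X), IsClosed A →
      ∃ (pdX : Hcech X ((n : ℤ) - k) ≃+ Hrel X (∅ : Set X) k)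
        (pdA : Hcech (↥A) ((n : ℤ) - k) ≃+ Hrel X Aᶜ k),
        ∀ η : Hcech X ((n : ℤ) - k),
          pdA (ccmap (⟨Subtype.val, continuous_subtype_val⟩ : C(↥A, X)) ((n : ℤ) - k) η) =
          hmap (ContinuousMap.id X) (Set.mapsTo_empty _ _) k (pdX η)
  /-- every closed topological manifold is `R`-orientable if `2 = 0` in `R` -/
  orient_two : (2 : R) = 0 → ∀ (n : ℕ) (X : Type) [TopologicalSpace X] [T2Space X]
    [ChartedSpace (EuclideanSpace ℝ (Fin n)) X] [CompactSpace X],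
    ROrientable toTheory n X

/-- A (finite rank) vector bundle over the base `Y` with scalar field `𝕜`, packaged as a
structure: a model fibre `F` and a family of fibres `E y` together with all the data making
it a topological vector bundle. -/
structure VB (𝕜 : Type) [NontriviallyNormedField 𝕜] (Y : Type) [TopologicalSpace Y] :
    Type 1 where
  /-- the model fibre -/
  F : Type
  [nF : NormedAddCommGroup F]
  [sF : NormedSpace 𝕜 F]
  [fdF : FiniteDimensional 𝕜 F]
  /-- the fibres -/
  E : Y → Type
  [aE : ∀ y, AddCommGroup (E y)]
  [mE : ∀ y, Module 𝕜 (E y)]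
  [tE : ∀ y, TopologicalSpace (E y)]
  [tT : TopologicalSpace (Bundle.TotalSpace F E)]
  [fb : FiberBundle F E]
  [vb : VectorBundle 𝕜 F E]

attribute [instance] VB.nF VB.sF VB.fdF VB.aE VB.mE VB.tE VB.tT VB.fb VB.vb

/-- A morphism of vector bundles over `X`: a fibrewise (continuous) linear map which is
continuous as a map of total spaces. -/
def IsBundleMorphism {𝕜 : Type} [NontriviallyNormedField 𝕜] {X : Type} [TopologicalSpace X]
    (V W : VB 𝕜 X) (L : ∀ x, V.E x →L[𝕜] W.E x) : Prop :=
  Continuous fun p : Bundle.TotalSpace V.F V.E =>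
    (Bundle.TotalSpace.mk p.1 (L p.1 p.2) : Bundle.TotalSpace W.F W.E)

/-- The singular set `Σ(L) = {λ ∈ X | L_λ ∉ GL(E_λ, F_λ)}` of a bundle morphism `L`:
the set of points of the base over which `L` is not a linear isomorphism of fibres. -/
def singularSet {𝕜 : Type} [NontriviallyNormedField 𝕜] {X : Type} [TopologicalSpace X]
    (V W : VB 𝕜 X) (L : ∀ x, V.E x →L[𝕜] W.E x) : Set X :=
  {x : X | ¬ Function.Bijective (L x)}

/-- An `H^k(·;G)`-valued characteristic class `c`: it assigns to every vector bundle over a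
base `Y` a class `c(E) ∈ H^k(Y;G)`, such that `c(E₁) = f^* c(E₂)` whenever a continuous map
`f : Y → Z` is covered by a (fibrewise isomorphic, continuous) bundle map `E₁ → E₂`. -/
structure CharClass {R : Type} [CommRing R] [IsDomain R] [IsPrincipalIdealRing R]
    {G : Type} [AddCommGroup G] [Module R G] (T : GoodTheory R G)
    (𝕜 : Type) [NontriviallyNormedField 𝕜] (k : ℤ) where
  /-- the value of the characteristic class on a bundle -/
  cls : ∀ (Y : Type) [TopologicalSpace Y], VB 𝕜 Y → T.Hco Y k
  /-- naturality with respect to bundle maps covering continuous maps -/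
  natural : ∀ (Y Z : Type) [TopologicalSpace Y] [TopologicalSpace Z]
    (V : VB 𝕜 Y) (W : VB 𝕜 Z) (f : C(Y, Z)) (φ : ∀ y, V.E y ≃ₗ[𝕜] W.E (f y)),
    Continuous (fun p : Bundle.TotalSpace V.F V.E =>
      (Bundle.TotalSpace.mk (f p.1) (φ p.1 p.2) : Bundle.TotalSpace W.F W.E)) →
    cls Y V = T.cmap f k (cls Z W)

theorem ContinuousLinearMap.isOpen_setOf_bijective {𝕜 : Type} [NontriviallyNormedField 𝕜]
    [CompleteSpace 𝕜] {E F : Type} [NormedAddCommGroup E] [NormedSpace 𝕜 E]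
    [FiniteDimensional 𝕜 E] [NormedAddCommGroup F] [NormedSpace 𝕜 F] :
    IsOpen {f : E →L[𝕜] F | Function.Bijective f} := by
  have : CompleteSpace E := FiniteDimensional.complete 𝕜 E
  convert ContinuousLinearEquiv.isOpen (𝕜 := 𝕜) (E := E) (F := F) using 1
  ext f
  refine ⟨fun hf => ?_, ?_⟩
  · have : FiniteDimensional 𝕜 F :=
      (LinearEquiv.ofBijective (f : E →ₗ[𝕜] F) hf).finiteDimensional
    exact ⟨(LinearEquiv.ofBijective (f : E →ₗ[𝕜] F) hf).toContinuousLinearEquiv, rfl⟩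
  · rintro ⟨e, rfl⟩
    exact e.bijective

section SingularSet

variable {𝕜 : Type} [NontriviallyNormedField 𝕜] {X : Type} [TopologicalSpace X]

theorem isOpen_compl_singularSet [CompleteSpace 𝕜] (V W : VB 𝕜 X)
    (L : ∀ x, V.E x →L[𝕜] W.E x) (hL : IsBundleMorphism V W L) :
    IsOpen (singularSet V W L)ᶜ := by
  rw [isOpen_iff_forall_mem_open]
  intro x₀ hx₀
  let eV := trivializationAt V.F V.E x₀
  let eW := trivializationAt W.F W.E x₀
  let S := eV.baseSet ∩ eW.baseSet
  let A : X → V.F →L[𝕜] W.F := fun x =>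
    (eW.continuousLinearMapAt 𝕜 x).comp ((L x).comp (eV.symmL 𝕜 x))
  have hA : ContinuousOn A S := by
    refine continuousOn_clm_apply.mpr fun v => ?_
    have hsymm : ContinuousOn (fun x => (⟨x, eV.symm x v⟩ : TotalSpace V.F V.E)) S :=
      eV.continuousOn_symm.comp (continuous_id.prodMk continuous_const).continuousOn
        fun x hx => ⟨hx.1, mem_univ _⟩
    refine (continuous_snd.comp_continuousOn (eW.continuousOn.comp
      (hL.comp_continuousOn hsymm) fun x hx => eW.mem_source.mpr hx.2)).congr ?_
    intro x hx
    simp [A, eV.symmL_apply hx.1, eW.coe_linearMapAt_of_mem hx.2]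
  have hbij : ∀ x ∈ S, Function.Bijective (A x) ↔ Function.Bijective (L x) := by
    intro x hx
    have hA : ⇑(A x) = eW.continuousLinearEquivAt 𝕜 x hx.2 ∘ L x ∘
        (eV.continuousLinearEquivAt 𝕜 x hx.1).symm := by
      rw [eW.coe_continuousLinearEquivAt_eq hx.2, eV.symm_continuousLinearEquivAt_eq hx.1]
      rfl
    rw [hA, EquivLike.comp_bijective, EquivLike.bijective_comp]
  refine ⟨S ∩ A ⁻¹' {f | Function.Bijective f}, fun x hx => not_not.mpr ((hbij x hx.1).mp hx.2),
    hA.isOpen_inter_preimage (eV.open_baseSet.inter eW.open_baseSet)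
      ContinuousLinearMap.isOpen_setOf_bijective, ?_⟩
  have hx₀S : x₀ ∈ S := ⟨FiberBundle.mem_baseSet_trivializationAt V.F V.E x₀,
    FiberBundle.mem_baseSet_trivializationAt W.F W.E x₀⟩
  exact ⟨hx₀S, (hbij x₀ hx₀S).mpr (not_not.mp hx₀)⟩

theorem isClosed_singularSet [CompleteSpace 𝕜] (V W : VB 𝕜 X)
    (L : ∀ x, V.E x →L[𝕜] W.E x) (hL : IsBundleMorphism V W L) :
    IsClosed (singularSet V W L) :=
  isOpen_compl_iff.mp (isOpen_compl_singularSet V W L hL)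

end SingularSet

def VB.restrict {𝕜 : Type} [NontriviallyNormedField 𝕜] {X : Type} [TopologicalSpace X]
    (V : VB 𝕜 X) (U : Set X) : VB 𝕜 U where
  F := V.F
  E := ((⟨Subtype.val, continuous_subtype_val⟩ : C(U, X)) : U → X) *ᵖ V.E
  aE y := inferInstanceAs (AddCommGroup (V.E y))
  mE y := inferInstanceAs (Module 𝕜 (V.E y))
  tE y := inferInstanceAs (TopologicalSpace (V.E y))
  fb := inferInstanceAs (FiberBundle V.F
    (((⟨Subtype.val, continuous_subtype_val⟩ : C(U, X)) : U → X) *ᵖ V.E))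
  vb := inferInstanceAs (VectorBundle 𝕜 V.F
    (((⟨Subtype.val, continuous_subtype_val⟩ : C(U, X)) : U → X) *ᵖ V.E))

namespace CharClass

variable {R : Type} [CommRing R] [IsDomain R] [IsPrincipalIdealRing R]
  {G : Type} [AddCommGroup G] [Module R G] {T : GoodTheory R G}
  {𝕜 : Type} [NontriviallyNormedField 𝕜] {k : ℤ} {X : Type} [TopologicalSpace X]

theorem cls_restrict (p : CharClass T 𝕜 k) (V : VB 𝕜 X) (U : Set X) :
    p.cls U (V.restrict U) =
      T.cmap (⟨Subtype.val, continuous_subtype_val⟩ : C(U, X)) k (p.cls X V) :=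
  p.natural U X (V.restrict U) V _ (fun y => LinearEquiv.refl 𝕜 (V.E y))
    (Pullback.continuous_lift V.F V.E _)

theorem cls_restrict_eq_of_bijective (p : CharClass T 𝕜 k) (V W : VB 𝕜 X)
    (L : ∀ x, V.E x →L[𝕜] W.E x) (hL : IsBundleMorphism V W L) (U : Set X)
    (hbij : ∀ y : U, Function.Bijective (L y)) :
    p.cls U (V.restrict U) = p.cls U (W.restrict U) := by
  rw [p.natural U U (V.restrict U) (W.restrict U) (ContinuousMap.id U)
    (fun y => LinearEquiv.ofBijective (L y : V.E y →ₗ[𝕜] W.E y) (hbij y)) ?_, T.cmap_id]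
  exact (inducing_pullbackTotalSpaceEmbedding W.F W.E _).continuous_iff.mpr
    ((Pullback.continuous_proj V.F V.E _).prodMk (hL.comp (Pullback.continuous_lift V.F V.E _)))

theorem cmap_sub_eq_zero_on_compl_singularSet (p : CharClass T 𝕜 k) (V W : VB 𝕜 X)
    (L : ∀ x, V.E x →L[𝕜] W.E x) (hL : IsBundleMorphism V W L) :
    T.cmap (⟨Subtype.val, continuous_subtype_val⟩ : C(↥(singularSet V W L)ᶜ, X)) k
      (p.cls X V - p.cls X W) = 0 := by
  rw [map_sub, ← p.cls_restrict, ← p.cls_restrict,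
    p.cls_restrict_eq_of_bijective V W L hL _ fun y => not_not.mp y.2, sub_self]

end CharClass

section Homology

variable {R : Type} [CommRing R] [IsDomain R] [IsPrincipalIdealRing R]
  {G : Type} [AddCommGroup G] [Module R G]

theorem Theory.exists_hmap_ne_zero_of_cmap_eq_zero (T : Theory R G) {X : Type}
    [TopologicalSpace X] (A : Set X) (k : ℤ) (c : T.Hco X k)
    (hc : c ∉ Set.range (T.betaMap X k))
    (hres : T.cmap (⟨Subtype.val, continuous_subtype_val⟩ : C(↥Aᶜ, X)) k c = 0) :
    ∃ ξ : T.Hrel X ∅ k,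
      T.hmap (ContinuousMap.id X) (Set.mapsTo_empty _ _) k ξ ≠ (0 : T.Hrel X Aᶜ k) := by
  obtain ⟨ξ, hξ⟩ : ∃ ξ, T.pair X k c ξ ≠ 0 := by
    by_contra! h
    exact hc ((T.uct_exact X k c).mp (LinearMap.ext h))
  refine ⟨ξ, fun hπ => hξ ?_⟩
  obtain ⟨ζ, rfl⟩ := (T.les_exact X A k ξ).mp hπ
  rw [← T.pair_natural, hres, map_zero, LinearMap.zero_apply]

theorem GoodTheory.exists_cech_ne_zero_of_hmap_ne_zero (T : GoodTheory R G) (n : ℕ)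
    (X : Type) [TopologicalSpace X] [T2Space X] [ChartedSpace (EuclideanSpace ℝ (Fin n)) X]
    [CompactSpace X] (hor : ROrientable T.toTheory n X) (k : ℤ) {A : Set X} (hA : IsClosed A)
    {ξ : T.Hrel X ∅ k}
    (hξ : T.hmap (ContinuousMap.id X) (Set.mapsTo_empty _ _) k ξ ≠ (0 : T.Hrel X Aᶜ k)) :
    ∃ η : T.Hcech A ((n : ℤ) - k), η ≠ 0 := by
  obtain ⟨pdX, pdA, hcomm⟩ := T.pd n X hor k A hA
  refine ⟨T.ccmap ⟨Subtype.val, continuous_subtype_val⟩ _ (pdX.symm ξ), fun h0 => hξ ?_⟩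
  rw [← pdX.apply_symm_apply ξ, ← hcomm, h0, map_zero]

theorem GoodTheory.le_covDim_of_hmap_ne_zero (T : GoodTheory R G) (n : ℕ)
    (X : Type) [TopologicalSpace X] [T2Space X] [ChartedSpace (EuclideanSpace ℝ (Fin n)) X]
    [CompactSpace X] (hor : ROrientable T.toTheory n X) (k : ℕ) {A : Set X} (hA : IsClosed A)
    {ξ : T.Hrel X ∅ k}
    (hξ : T.hmap (ContinuousMap.id X) (Set.mapsTo_empty _ _) k ξ ≠ (0 : T.Hrel X Aᶜ k)) :
    ((n - k : ℕ) : ℕ∞) ≤ covDim A := by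
  rcases Nat.lt_or_ge n k with hnk | hkn
  · simp [Nat.sub_eq_zero_of_le hnk.le]
  · have : CompactSpace A := isCompact_iff_compactSpace.mp hA.isCompact
    refine T.dim_cech A (n - k) ?_
    rw [Nat.cast_sub hkn]
    exact T.exists_cech_ne_zero_of_hmap_ne_zero n X hor k hA hξ

end Homology

theorem covDim_ge_of_pontryagin_general
    (T : GoodTheory ℤ ℤ)
    (n : ℕ) (X : Type) [TopologicalSpace X] [T2Space X]
    [ChartedSpace (EuclideanSpace ℝ (Fin n)) X] [CompactSpace X]
    (hor : ROrientable T.toTheory n X)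
    (V W : VB ℝ X)
    (L : ∀ x, V.E x →L[ℝ] W.E x) (hL : IsBundleMorphism V W L)
    (p : CharClass T ℝ (4 : ℤ))
    (hp : p.cls X V - p.cls X W ∉ Set.range (T.betaMap X (4 : ℤ))) :
    ((n - 4 : ℕ) : ℕ∞) ≤ covDim ↥(singularSet V W L) := by
  obtain ⟨ξ, hξ⟩ := T.exists_hmap_ne_zero_of_cmap_eq_zero (singularSet V W L) 4 _ hp
    (p.cmap_sub_eq_zero_on_compl_singularSet V W L hL)
  exact T.le_covDim_of_hmap_ne_zero n X hor 4 (isClosed_singularSet V W L hL) hξ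

/-- Let `X` be a closed orientable (i.e. `ℤ`-orientable) topological
manifold of dimension `n`, `E` and `F` real vector bundles of the same fibre dimension over
`X`, and `L : E → F` a bundle morphism. If the first Pontryagin classes satisfy
`p₁(E) - p₁(F) ∉ im β⁴ ⊆ H⁴(X;ℤ)`, where `β⁴ : Ext¹_ℤ(H₃(X;ℤ),ℤ) → H⁴(X;ℤ)` is the map
from the universal coefficient theorem, then the covering dimension of `Σ(L)` is at least
`n - 4`. (The first Pontryagin class is represented by an `H⁴(·;ℤ)`-valued characteristic
class `p` of real vector bundles, since its only property used is naturality.) -/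
theorem covDim_ge_of_pontryagin
    (T : GoodTheory ℤ ℤ)
    (n : ℕ) (X : Type) [TopologicalSpace X] [T2Space X]
    [ChartedSpace (EuclideanSpace ℝ (Fin n)) X] [CompactSpace X]
    (hor : ROrientable T.toTheory n X)
    (V W : VB ℝ X) (hrank : Module.finrank ℝ V.F = Module.finrank ℝ W.F)
    (L : ∀ x, V.E x →L[ℝ] W.E x) (hL : IsBundleMorphism V W L)
    (p : CharClass T ℝ (4 : ℤ))
    (hp : p.cls X V - p.cls X W ∉ Set.range (T.betaMap X (4 : ℤ))) :
    ((n - 4 : ℕ) : ℕ∞) ≤ covDim ↥(singularSet V W L) :=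
  covDim_ge_of_pontryagin_general T n X hor V W L hL p hp

end
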